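/- For every extended Δ0 formula φ(x̄) there is an NRC expression Verify_φ(x̄) of Boolean type (Set(Unit)) such that for all nested relational inputs x̄, Verify_φ(x̄) evaluates to true (the singleton {⟨⟩}) if and only if φ(x̄) holds, and Verify_φ can be computed from φ in polynomial time. -/

import Mathlib

inductive NTy : Type
  | ur : NTy
  | unit : NTy
  | prod : NTy → NTy → NTy
  | set : NTy → NTy
deriving DecidableEq

def NObj (U : Type) : NTy → Type
  | .ur => U
  | .unit => Unit
  | .prod a b => NObj U a × NObj U b
  | .set a => Set (NObj U a)

def NObj.asSet {U : Type} {T : NTy} (s : NObj U (NTy.set T)) : Set (NObj U T) := s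

def Env (U : Type) (Γ : List NTy) : Type := (i : Fin Γ.length) → NObj U (Γ.get i)

def Env.nil {U : Type} : Env U [] := fun i => i.elim0

def Env.cons {U : Type} {T : NTy} {Γ : List NTy} (x : NObj U T) (ρ : Env U Γ) :
    Env U (T :: Γ) := fun i =>
  Fin.cases (motive := fun i => NObj U ((T :: Γ).get i)) x (fun j => ρ j) i

inductive Tm : List NTy → NTy → Type
  | var {Γ} (i : Fin Γ.length) : Tm Γ (Γ.get i)
  | unit {Γ} : Tm Γ NTy.unit
  | pair {Γ a b} : Tm Γ a → Tm Γ b → Tm Γ (NTy.prod a b)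
  | fst {Γ a b} : Tm Γ (NTy.prod a b) → Tm Γ a
  | snd {Γ a b} : Tm Γ (NTy.prod a b) → Tm Γ b

def Tm.eval {U : Type} : ∀ {Γ T}, Tm Γ T → Env U Γ → NObj U T
  | _, _, .var i, ρ => ρ i
  | _, _, .unit, _ => ()
  | _, _, .pair s t, ρ => (s.eval ρ, t.eval ρ)
  | _, _, .fst t, ρ => (t.eval ρ).1
  | _, _, .snd t, ρ => (t.eval ρ).2

inductive D0 : List NTy → Type
  | eq {Γ} : Tm Γ NTy.ur → Tm Γ NTy.ur → D0 Γ
  | ne {Γ} : Tm Γ NTy.ur → Tm Γ NTy.ur → D0 Γ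
  | tru {Γ} : D0 Γ
  | fls {Γ} : D0 Γ
  | and {Γ} : D0 Γ → D0 Γ → D0 Γ
  | or {Γ} : D0 Γ → D0 Γ → D0 Γ
  | all {Γ T} : Tm Γ (NTy.set T) → D0 (T :: Γ) → D0 Γ
  | ex {Γ T} : Tm Γ (NTy.set T) → D0 (T :: Γ) → D0 Γ

def D0.Sat {U : Type} : ∀ {Γ}, D0 Γ → Env U Γ → Prop
  | _, .eq s t, ρ => s.eval ρ = t.eval ρ
  | _, .ne s t, ρ => s.eval ρ ≠ t.eval ρ
  | _, .tru, _ => True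
  | _, .fls, _ => False
  | _, .and φ ψ, ρ => φ.Sat ρ ∧ ψ.Sat ρ
  | _, .or φ ψ, ρ => φ.Sat ρ ∨ ψ.Sat ρ
  | _, .all t φ, ρ => ∀ x ∈ NObj.asSet (t.eval ρ), φ.Sat (Env.cons x ρ)
  | _, .ex t φ, ρ => ∃ x ∈ NObj.asSet (t.eval ρ), φ.Sat (Env.cons x ρ)

def Tm.fv : ∀ {Γ T}, Tm Γ T → Finset (Fin Γ.length)
  | _, _, .var i => {i}
  | _, _, .unit => ∅
  | _, _, .pair s t => s.fv ∪ t.fv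
  | _, _, .fst t => t.fv
  | _, _, .snd t => t.fv

def lowerFv {n : ℕ} (s : Finset (Fin (n + 1))) : Finset (Fin n) :=
  Finset.univ.filter (fun j => j.succ ∈ s)

def D0.fv : ∀ {Γ}, D0 Γ → Finset (Fin Γ.length)
  | _, .eq s t => s.fv ∪ t.fv
  | _, .ne s t => s.fv ∪ t.fv
  | _, .tru => ∅
  | _, .fls => ∅
  | _, .and φ ψ => φ.fv ∪ ψ.fv
  | _, .or φ ψ => φ.fv ∪ ψ.fv
  | _, .all t φ => t.fv ∪ lowerFv φ.fv
  | _, .ex t φ => t.fv ∪ lowerFv φ.fv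

open Classical

/-- The default object of each type (used by `get` on non-singletons). -/
def NObj.defaultObj (U : Type) [Inhabited U] : ∀ T : NTy, NObj U T
  | .ur => (default : U)
  | .unit => ()
  | .prod a b => (NObj.defaultObj U a, NObj.defaultObj U b)
  | .set _ => (∅ : Set _)

/-- The nested relational calculus `NRC`, with tuple operations, singleton, empty set,
union, difference, the comprehension/union operator `⋃{E₁ | x ∈ E₂}`, and the `get`
operator extracting the unique element of a singleton. -/
inductive NRC : List NTy → NTy → Type
  | var {Γ} (i : Fin Γ.length) : NRC Γ (Γ.get i)
  | unit {Γ} : NRC Γ NTy.unit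
  | pair {Γ a b} : NRC Γ a → NRC Γ b → NRC Γ (NTy.prod a b)
  | fst {Γ a b} : NRC Γ (NTy.prod a b) → NRC Γ a
  | snd {Γ a b} : NRC Γ (NTy.prod a b) → NRC Γ b
  | sing {Γ T} : NRC Γ T → NRC Γ (NTy.set T)
  | empty {Γ T} : NRC Γ (NTy.set T)
  | union {Γ T} : NRC Γ (NTy.set T) → NRC Γ (NTy.set T) → NRC Γ (NTy.set T)
  | diff {Γ T} : NRC Γ (NTy.set T) → NRC Γ (NTy.set T) → NRC Γ (NTy.set T)
  | bigUnion {Γ S T} : NRC (S :: Γ) (NTy.set T) → NRC Γ (NTy.set S) → NRC Γ (NTy.set T)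
  | get {Γ T} : NRC Γ (NTy.set T) → NRC Γ T

/-- Evaluation of `NRC` expressions on nested relational instances. -/
noncomputable def NRC.eval {U : Type} [Inhabited U] : ∀ {Γ T}, NRC Γ T → Env U Γ → NObj U T
  | _, _, .var i, ρ => ρ i
  | _, _, .unit, _ => ()
  | _, _, .pair s t, ρ => (s.eval ρ, t.eval ρ)
  | _, _, .fst t, ρ => (t.eval ρ).1
  | _, _, .snd t, ρ => (t.eval ρ).2
  | _, _, .sing e, ρ => ({e.eval ρ} : Set _)
  | _, _, .empty, _ => (∅ : Set _)
  | _, _, .union e₁ e₂, ρ => (NObj.asSet (e₁.eval ρ) ∪ NObj.asSet (e₂.eval ρ) : Set _)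
  | _, _, .diff e₁ e₂, ρ => (NObj.asSet (e₁.eval ρ) \ NObj.asSet (e₂.eval ρ) : Set _)
  | _, _, .bigUnion e₁ e₂, ρ =>
      { y | ∃ x ∈ NObj.asSet (e₂.eval ρ), y ∈ NObj.asSet (e₁.eval (Env.cons x ρ)) }
  | _, _, .get (T := T) e, ρ =>
      if h : ∃ x, e.eval ρ = ({x} : Set (NObj U T)) then h.choose else NObj.defaultObj U T

/-- Free variables of an `NRC` expression. -/
def NRC.fv : ∀ {Γ T}, NRC Γ T → Finset (Fin Γ.length)
  | _, _, .var i => {i}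
  | _, _, .unit => ∅
  | _, _, .pair s t => s.fv ∪ t.fv
  | _, _, .fst t => t.fv
  | _, _, .snd t => t.fv
  | _, _, .sing e => e.fv
  | _, _, .empty => ∅
  | _, _, .union e₁ e₂ => e₁.fv ∪ e₂.fv
  | _, _, .diff e₁ e₂ => e₁.fv ∪ e₂.fv
  | _, _, .bigUnion e₁ e₂ => lowerFv e₁.fv ∪ e₂.fv
  | _, _, .get e => e.fv

/-- *Extended* Δ₀ formulas: Δ₀ formulas enriched with membership atoms `t ∈_T u`,
`t ∉_T u` and equality atoms `t =_T u`, `t ≠_T u` at every type `T`. -/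
inductive ED0 : List NTy → Type
  | eqT {Γ T} : Tm Γ T → Tm Γ T → ED0 Γ
  | neT {Γ T} : Tm Γ T → Tm Γ T → ED0 Γ
  | mem {Γ T} : Tm Γ T → Tm Γ (NTy.set T) → ED0 Γ
  | nmem {Γ T} : Tm Γ T → Tm Γ (NTy.set T) → ED0 Γ
  | tru {Γ} : ED0 Γ
  | fls {Γ} : ED0 Γ
  | and {Γ} : ED0 Γ → ED0 Γ → ED0 Γ
  | or {Γ} : ED0 Γ → ED0 Γ → ED0 Γ
  | all {Γ T} : Tm Γ (NTy.set T) → ED0 (T :: Γ) → ED0 Γ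
  | ex {Γ T} : Tm Γ (NTy.set T) → ED0 (T :: Γ) → ED0 Γ

def ED0.Sat {U : Type} : ∀ {Γ}, ED0 Γ → Env U Γ → Prop
  | _, .eqT s t, ρ => s.eval ρ = t.eval ρ
  | _, .neT s t, ρ => s.eval ρ ≠ t.eval ρ
  | _, .mem s t, ρ => s.eval ρ ∈ NObj.asSet (t.eval ρ)
  | _, .nmem s t, ρ => s.eval ρ ∉ NObj.asSet (t.eval ρ)
  | _, .tru, _ => True
  | _, .fls, _ => False
  | _, .and φ ψ, ρ => φ.Sat ρ ∧ ψ.Sat ρ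
  | _, .or φ ψ, ρ => φ.Sat ρ ∨ ψ.Sat ρ
  | _, .all t φ, ρ => ∀ x ∈ NObj.asSet (t.eval ρ), φ.Sat (Env.cons x ρ)
  | _, .ex t φ, ρ => ∃ x ∈ NObj.asSet (t.eval ρ), φ.Sat (Env.cons x ρ)

def Tm.size : ∀ {Γ T}, Tm Γ T → ℕ
  | _, _, .var _ => 1
  | _, _, .unit => 1
  | _, _, .pair s t => s.size + t.size + 1
  | _, _, .fst t => t.size + 1
  | _, _, .snd t => t.size + 1

def ED0.size : ∀ {Γ}, ED0 Γ → ℕ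
  | _, .eqT s t => s.size + t.size + 1
  | _, .neT s t => s.size + t.size + 1
  | _, .mem s t => s.size + t.size + 1
  | _, .nmem s t => s.size + t.size + 1
  | _, .tru => 1
  | _, .fls => 1
  | _, .and φ ψ => φ.size + ψ.size + 1
  | _, .or φ ψ => φ.size + ψ.size + 1
  | _, .all t φ => t.size + φ.size + 1
  | _, .ex t φ => t.size + φ.size + 1

def NRC.size : ∀ {Γ T}, NRC Γ T → ℕ
  | _, _, .var _ => 1
  | _, _, .unit => 1
  | _, _, .pair s t => s.size + t.size + 1
  | _, _, .fst t => t.size + 1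
  | _, _, .snd t => t.size + 1
  | _, _, .sing e => e.size + 1
  | _, _, .empty => 1
  | _, _, .union e₁ e₂ => e₁.size + e₂.size + 1
  | _, _, .diff e₁ e₂ => e₁.size + e₂.size + 1
  | _, _, .bigUnion e₁ e₂ => e₁.size + e₂.size + 1
  | _, _, .get e => e.size + 1

/-- NRC Booleans are objects of type `Set(Unit)`, with `true = {⟨⟩}`. -/
def nrcTrue : Set Unit := {()}

/-!
An NRC Boolean `e : Set(Unit)` is true exactly when `() ∈ e`, so the verifier can be built
compositionally: negation is `{()} \ e`, conjunction follows by De Morgan from union, a bounded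
`∃ x ∈ t, φ` is the union `⋃{Verify_φ(x) | x ∈ t}` and `∀` is its dual. An atom `s ∈ t` holds
iff `{s} \ t` is empty, where emptiness of `e` is the negation of `⋃{{()} | x ∈ e}`, and `s = t`
is read as `s ∈ {t}`. Each construct adds a bounded number of nodes, so `|Verify_φ| ≤ 12 |φ|`.
-/

def Tm.toNRC : ∀ {Γ T}, Tm Γ T → NRC Γ T
  | _, _, .var i => .var i
  | _, _, .unit => .unit
  | _, _, .pair s t => .pair s.toNRC t.toNRC
  | _, _, .fst t => .fst t.toNRC
  | _, _, .snd t => .snd t.toNRC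

@[simp]
theorem Tm.eval_toNRC {U : Type} [Inhabited U] {Γ T} (t : Tm Γ T) (ρ : Env U Γ) :
    t.toNRC.eval ρ = t.eval ρ := by
  induction t with
  | pair s t hs ht => simp only [Tm.toNRC, NRC.eval, Tm.eval, hs, ht]; rfl
  | unit => rfl
  | _ => simp only [Tm.toNRC, NRC.eval, Tm.eval, *]

@[simp]
theorem Tm.size_toNRC {Γ T} (t : Tm Γ T) : t.toNRC.size = t.size := by
  induction t <;> simp only [Tm.toNRC, NRC.size, Tm.size, *]

theorem Tm.one_le_size {Γ T} (t : Tm Γ T) : 1 ≤ t.size := by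
  cases t <;> simp only [Tm.size] <;> omega

namespace NRC

variable {Γ : List NTy}

def Holds {U : Type} [Inhabited U] (e : NRC Γ (.set .unit)) (ρ : Env U Γ) : Prop :=
  () ∈ NObj.asSet (e.eval ρ)

def bnot (e : NRC Γ (.set .unit)) : NRC Γ (.set .unit) :=
  .diff (.sing .unit) e

def band (e₁ e₂ : NRC Γ (.set .unit)) : NRC Γ (.set .unit) :=
  bnot (.union (bnot e₁) (bnot e₂))

def nonemptyTest {T} (e : NRC Γ (.set T)) : NRC Γ (.set .unit) :=
  .bigUnion (.sing .unit) e

def emptyTest {T} (e : NRC Γ (.set T)) : NRC Γ (.set .unit) :=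
  bnot (nonemptyTest e)

def memTest {T} (s : NRC Γ T) (e : NRC Γ (.set T)) : NRC Γ (.set .unit) :=
  emptyTest (.diff (.sing s) e)

section size

variable {T : NTy}

@[simp]
theorem size_bnot (e : NRC Γ (.set .unit)) : (bnot e).size = e.size + 3 := by
  simp only [bnot, size]; omega

@[simp]
theorem size_band (e₁ e₂ : NRC Γ (.set .unit)) : (band e₁ e₂).size = e₁.size + e₂.size + 10 := by
  simp only [band, size_bnot, size]; omega

@[simp]
theorem size_nonemptyTest (e : NRC Γ (.set T)) : (nonemptyTest e).size = e.size + 3 := by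
  simp only [nonemptyTest, size]; omega

@[simp]
theorem size_emptyTest (e : NRC Γ (.set T)) : (emptyTest e).size = e.size + 6 := by
  simp only [emptyTest, size_bnot, size_nonemptyTest]

@[simp]
theorem size_memTest (s : NRC Γ T) (e : NRC Γ (.set T)) :
    (memTest s e).size = s.size + e.size + 8 := by
  simp only [memTest, size_emptyTest, size]; omega

end size

section holds

variable {U : Type} [Inhabited U] {T : NTy} (ρ : Env U Γ)

theorem asSet_eval_eq_nrcTrue_iff (e : NRC Γ (.set .unit)) :
    NObj.asSet (e.eval ρ) = nrcTrue ↔ e.Holds ρ :=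
  Set.eq_singleton_iff_unique_mem.trans (and_iff_left fun _ _ => rfl)

theorem holds_sing_unit : (sing unit : NRC Γ (.set .unit)).Holds ρ :=
  Set.mem_singleton ()

theorem not_holds_empty : ¬ (empty : NRC Γ (.set .unit)).Holds ρ :=
  Set.notMem_empty ()

theorem holds_union (e₁ e₂ : NRC Γ (.set .unit)) :
    (union e₁ e₂).Holds ρ ↔ e₁.Holds ρ ∨ e₂.Holds ρ :=
  Set.mem_union _ _ _

theorem holds_bigUnion {S} (e₁ : NRC (S :: Γ) (.set .unit)) (e₂ : NRC Γ (.set S)) :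
    (bigUnion e₁ e₂).Holds ρ ↔ ∃ x ∈ NObj.asSet (e₂.eval ρ), e₁.Holds (Env.cons x ρ) :=
  Iff.rfl

theorem holds_bnot (e : NRC Γ (.set .unit)) : (bnot e).Holds ρ ↔ ¬ e.Holds ρ :=
  and_iff_right (Set.mem_singleton ())

theorem holds_band (e₁ e₂ : NRC Γ (.set .unit)) :
    (band e₁ e₂).Holds ρ ↔ e₁.Holds ρ ∧ e₂.Holds ρ := by
  simp only [band, holds_bnot, holds_union, not_or, not_not]

theorem holds_nonemptyTest (e : NRC Γ (.set T)) :
    (nonemptyTest e).Holds ρ ↔ (NObj.asSet (e.eval ρ)).Nonempty := by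
  simp only [nonemptyTest, holds_bigUnion, holds_sing_unit, and_true]
  rfl

theorem holds_emptyTest (e : NRC Γ (.set T)) :
    (emptyTest e).Holds ρ ↔ NObj.asSet (e.eval ρ) = ∅ := by
  rw [emptyTest, holds_bnot, holds_nonemptyTest, Set.not_nonempty_iff_eq_empty]

theorem holds_memTest (s : NRC Γ T) (e : NRC Γ (.set T)) :
    (memTest s e).Holds ρ ↔ s.eval ρ ∈ NObj.asSet (e.eval ρ) := by
  rw [memTest, holds_emptyTest]
  exact Set.sdiff_eq_empty.trans Set.singleton_subset_iff

end holds

end NRC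

open NRC

def ED0.verify : ∀ {Γ}, ED0 Γ → NRC Γ (.set .unit)
  | _, .eqT s t => memTest s.toNRC (.sing t.toNRC)
  | _, .neT s t => bnot (memTest s.toNRC (.sing t.toNRC))
  | _, .mem s t => memTest s.toNRC t.toNRC
  | _, .nmem s t => bnot (memTest s.toNRC t.toNRC)
  | _, .tru => .sing .unit
  | _, .fls => .empty
  | _, .and φ ψ => band φ.verify ψ.verify
  | _, .or φ ψ => .union φ.verify ψ.verify
  | _, .all t φ => bnot (.bigUnion (bnot φ.verify) t.toNRC)
  | _, .ex t φ => .bigUnion φ.verify t.toNRC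

theorem ED0.size_verify_le {Γ} (φ : ED0 Γ) : φ.verify.size ≤ 12 * φ.size := by
  induction φ with
  | eqT s t | neT s t | mem s t | nmem s t =>
    have := s.one_le_size; have := t.one_le_size
    simp only [verify, size_bnot, size_memTest, NRC.size, Tm.size_toNRC, size]; omega
  | tru | fls => simp only [verify, NRC.size, size]; omega
  | and φ ψ hφ hψ | or φ ψ hφ hψ =>
    simp only [verify, size_band, NRC.size, size]; omega
  | all t φ hφ | ex t φ hφ =>
    simp only [verify, size_bnot, NRC.size, Tm.size_toNRC, size]; omega

theorem ED0.holds_verify_iff {U : Type} [Inhabited U] {Γ} (φ : ED0 Γ) (ρ : Env U Γ) :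
    φ.verify.Holds ρ ↔ φ.Sat ρ := by
  induction φ with
  | eqT s t | neT s t =>
    simp only [verify, holds_bnot, holds_memTest, NRC.eval, Tm.eval_toNRC, NObj.asSet,
      Set.mem_singleton_iff, Sat]
  | mem s t | nmem s t => simp only [verify, holds_bnot, holds_memTest, Tm.eval_toNRC, Sat]
  | tru => exact iff_of_true (holds_sing_unit ρ) trivial
  | fls => exact iff_of_false (not_holds_empty ρ) id
  | and φ ψ hφ hψ => rw [verify, holds_band, hφ, hψ, Sat]
  | or φ ψ hφ hψ => rw [verify, holds_union, hφ, hψ, Sat]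
  | all t φ hφ =>
    simp only [verify, holds_bnot, holds_bigUnion, hφ, Tm.eval_toNRC, Sat, not_exists, not_and,
      not_not]
  | ex t φ hφ => simp only [verify, holds_bigUnion, hφ, Tm.eval_toNRC, Sat]

/-- **The Verification Proposition** (Proposition 2.7): every extended Δ₀ formula `φ(x̄)`
has a corresponding `NRC` expression `Verify_φ(x̄)` of Boolean type `Set(Unit)` that
evaluates to true exactly when `φ(x̄)` holds; the translation is of (uniformly) polynomial
size in the size of `φ` (the formal counterpart of polynomial-time computability). -/
theorem verify_extended_d0_in_nrc :
    ∃ (V : ∀ {Γ : List NTy}, ED0 Γ → NRC Γ (NTy.set NTy.unit)) (c k : ℕ),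
      ∀ (Γ : List NTy) (φ : ED0 Γ),
        (V φ).size ≤ c * (φ.size + 1) ^ k ∧
        ∀ (U : Type) [Inhabited U] (ρ : Env U Γ),
          (NObj.asSet ((V φ).eval ρ) = nrcTrue) ↔ φ.Sat ρ := by
  refine ⟨ED0.verify, 12, 1, fun Γ φ => ⟨?_, fun U _ ρ => ?_⟩⟩
  · calc φ.verify.size ≤ 12 * φ.size := φ.size_verify_le
      _ ≤ 12 * (φ.size + 1) ^ 1 := by rw [pow_one]; omega
  · exact (asSet_eval_eq_nrcTrue_iff ρ _).trans (φ.holds_verify_iff ρ)
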